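/- In the net system of the synchronization pattern with n clients, every marking m reachable from the initial marking satisfies: (a) if m(q) = 1 then Σ_{j=1..n} m(q_j) ≤ 1, and (b) if Σ_{j=1..n} m(q_j) = 1 then m(q) = 1. -/

import Mathlib

namespace PortNets

/-- Direction of communication of a transition: send, receive, or internal (τ). -/
inductive Dir : Type
  | send | receive | tau
deriving DecidableEq

/-- Preset of a node `x` with respect to a flow relation `F`. -/
def pre {Node : Type} (F : Set (Node × Node)) (x : Node) : Set Node := {y | (y, x) ∈ F}

/-- Postset of a node `x` with respect to a flow relation `F`. -/
def post {Node : Type} (F : Set (Node × Node)) (x : Node) : Set Node := {y | (x, y) ∈ F}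

/-- Raw data of an open Petri net (with labels): internal places `P`, input places `I`,
output places `O`, transitions `T`, flow `F`, initial and final places, labeling `μ`. -/
structure OPN (Node L : Type) where
  P : Set Node
  I : Set Node
  O : Set Node
  T : Set Node
  F : Set (Node × Node)
  init : Set Node
  fin : Set Node
  μ : Node → L

variable {Node L : Type}

/-- All places of an OPN. -/
def OPN.places (N : OPN Node L) : Set Node := N.P ∪ N.I ∪ N.O

/-- All nodes of an OPN. -/
def OPN.nodes (N : OPN Node L) : Set Node := N.places ∪ N.T

/-- Structural requirements of an open Petri net. -/
structure IsOPN (N : OPN Node L) : Prop where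
  disjPI : N.P ∩ N.I = ∅
  disjPO : N.P ∩ N.O = ∅
  disjIO : N.I ∩ N.O = ∅
  disjPT : N.places ∩ N.T = ∅
  flow_sub : N.F ⊆ (N.places ×ˢ N.T) ∪ (N.T ×ˢ N.places)
  no_pre_I : ∀ x ∈ N.I, pre N.F x = ∅
  no_post_O : ∀ x ∈ N.O, post N.F x = ∅
  not_both : ∀ t ∈ N.T, ¬((pre N.F t ∩ N.I).Nonempty ∧ (post N.F t ∩ N.O).Nonempty)
  init_sub : N.init ⊆ N.P
  fin_sub : N.fin ⊆ N.P

open Classical in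
noncomputable def dir (N : OPN Node L) (t : Node) : Dir :=
  if (post N.F t ∩ N.O).Nonempty then Dir.send
  else if (pre N.F t ∩ N.I).Nonempty then Dir.receive
  else Dir.tau

open Classical in
noncomputable def fireAt (F : Set (Node × Node)) (m : Node → ℕ) (t : Node) : Node → ℕ :=
  fun p => m p - (if (p, t) ∈ F then 1 else 0) + (if (t, p) ∈ F then 1 else 0)

/-- `Fires T F m t m'`: transition `t` is enabled in marking `m` and firing it yields `m'`. -/
def Fires (T : Set Node) (F : Set (Node × Node)) (m : Node → ℕ) (t : Node)
    (m' : Node → ℕ) : Prop :=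
  t ∈ T ∧ (∀ p, (p, t) ∈ F → 1 ≤ m p) ∧ m' = fireAt F m t

/-- Firing a finite sequence of transitions. -/
inductive FireSeq (T : Set Node) (F : Set (Node × Node)) :
    (Node → ℕ) → List Node → (Node → ℕ) → Prop
  | nil (m : Node → ℕ) : FireSeq T F m [] m
  | cons {m m' m'' : Node → ℕ} {t : Node} {σ : List Node} :
      Fires T F m t m' → FireSeq T F m' σ m'' → FireSeq T F m (t :: σ) m''

/-- Reachability of markings. -/
def Reach (T : Set Node) (F : Set (Node × Node)) (m m' : Node → ℕ) : Prop :=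
  ∃ σ : List Node, FireSeq T F m σ m'

/-- Weak termination: from every marking reachable from `m0`, the marking `mf` is reachable. -/
def WeaklyTerminates (T : Set Node) (F : Set (Node × Node)) (m0 mf : Node → ℕ) : Prop :=
  ∀ m, Reach T F m0 m → Reach T F m mf

/-- The marking putting one token on each element of a set of places. -/
noncomputable def mark (s : Set Node) : Node → ℕ := s.indicator fun _ => 1

/-- Flow relation of the skeleton: all arcs not adjacent to interface places. -/
def skF (N : OPN Node L) : Set (Node × Node) :=
  {x ∈ N.F | x.1 ∉ N.I ∪ N.O ∧ x.2 ∉ N.I ∪ N.O}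

/-- The skeleton is a state machine: each transition has at most one place in its
preset and at most one in its postset. -/
def IsSM (N : OPN Node L) : Prop :=
  ∀ t ∈ N.T, (pre (skF N) t).Subsingleton ∧ (post (skF N) t).Subsingleton

/-- `x` lies on a path from `i` to `f` w.r.t. flow `F`. -/
def OnPath (F : Set (Node × Node)) (i f x : Node) : Prop :=
  ∃ l : List Node, l ≠ [] ∧ List.Chain' (fun a b => (a, b) ∈ F) l ∧
    l.head? = some i ∧ l.getLast? = some f ∧ x ∈ l

/-- Workflow net (with places `P`, transitions `T`, flow `F`): `i` is the unique place with
empty preset, `f` the unique place with empty postset, and every node is on a path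
from `i` to `f`. -/
def IsWFNOn (P T : Set Node) (F : Set (Node × Node)) (i f : Node) : Prop :=
  i ∈ P ∧ f ∈ P ∧ pre F i = ∅ ∧ post F f = ∅ ∧
    (∀ p ∈ P, pre F p = ∅ → p = i) ∧
    (∀ p ∈ P, post F p = ∅ → p = f) ∧
    (∀ x ∈ P ∪ T, OnPath F i f x)

/-- Transition `t` is connected (by an arc, in either direction) to node `x`. -/
def connected (N : OPN Node L) (t x : Node) : Prop := (x, t) ∈ N.F ∨ (t, x) ∈ N.F

/-- A labeled portnet: an OPN whose skeleton is a state-machine workflow net, with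
singleton `init` and `fin`, every transition connected to exactly one interface place,
transitions sharing an interface place sharing a label, and transitions sharing a
label sharing their interface place connections. -/
structure IsPortnet (N : OPN Node L) : Prop where
  isOPN : IsOPN N
  isSM : IsSM N
  init_single : ∃ i, N.init = {i}
  fin_single : ∃ f, N.fin = {f}
  isWFN : ∀ i f, N.init = {i} → N.fin = {f} → IsWFNOn N.P N.T (skF N) i f
  one_iface : ∀ t ∈ N.T, ∃! x, x ∈ N.I ∪ N.O ∧ connected N t x
  same_iface_label : ∀ x ∈ N.I ∪ N.O, ∀ t t', t ∈ N.T → t' ∈ N.T →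
    connected N t x → connected N t' x → N.μ t = N.μ t'
  same_label_iface : ∀ t ∈ N.T, ∀ t' ∈ N.T, N.μ t = N.μ t' →
    ∀ x ∈ N.I ∪ N.O, (connected N t x ↔ connected N t' x)

/-- Observable choices: distinct transitions in the postset of a place have distinct labels. -/
def ObservableChoices (N : OPN Node L) : Prop :=
  ∀ p ∈ N.P, ∀ t ∈ post N.F p, ∀ t' ∈ post N.F p, t ≠ t' → N.μ t ≠ N.μ t'

/-- Choice property: all transitions in the postset of a place have the same direction. -/
def ChoiceProp (N : OPN Node L) : Prop :=
  ∀ p ∈ N.P, ∀ t ∈ post N.F p, ∀ t' ∈ post N.F p, dir N t = dir N t'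

/-- Diamond property. -/
def DiamondProp (N : OPN Node L) : Prop :=
  ∀ p ∈ N.P, ∀ t ∈ post N.F p, ∀ t' ∈ post N.F p, dir N t ≠ dir N t' →
    ∀ q ∈ post (skF N) t, ∀ q' ∈ post (skF N) t',
      ∃ u ∈ post (skF N) q, ∃ u' ∈ post (skF N) q',
        (post (skF N) u ∩ post (skF N) u').Nonempty ∧
        N.μ t = N.μ u' ∧ N.μ t' = N.μ u

/-- Loop property. -/
def LoopProp (N : OPN Node L) : Prop :=
  ∀ p ∈ N.P, ∀ t ∈ post N.F p, ∀ t' ∈ post N.F p, t ≠ t' → dir N t = dir N t' →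
    ∀ (l : List Node) (t'' : Node),
      List.Chain' (fun a b => (a, b) ∈ N.F) (p :: t :: (l ++ [t''])) →
      t'' ∈ N.T → N.μ t'' = N.μ t' →
      (∀ u ∈ l, u ∈ N.T → N.μ u ≠ N.μ t') →
      ∃ v ∈ t :: (l ++ [t'']), v ∈ N.T ∧ dir N v ≠ dir N t

/-- Well-formed labeled portnet. -/
def WellFormed (N : OPN Node L) : Prop :=
  IsPortnet N ∧ ObservableChoices N ∧ DiamondProp N ∧ LoopProp N

/-- `(M, φ)` is a partial mirror of the labeled portnet `N`. -/
structure IsPartialMirror (N M : OPN Node L) (φ : Node → Node) : Prop where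
  portN : IsPortnet N
  portM : IsPortnet M
  inj : Set.InjOn φ M.nodes
  mapsP : ∀ x ∈ M.P, φ x ∈ N.P
  mapsT : ∀ x ∈ M.T, φ x ∈ N.T
  mapsI : ∀ x ∈ M.I, φ x ∈ N.O
  mapsO : ∀ x ∈ M.O, φ x ∈ N.I
  flow_same : ∀ x y, (x, y) ∈ M.F → x ∉ M.I → y ∉ M.O → (φ x, φ y) ∈ N.F
  flow_rev : ∀ x y, (x, y) ∈ M.F → (x ∈ M.I ∨ y ∈ M.O) → (φ y, φ x) ∈ N.F
  init_eq : φ '' M.init = N.init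
  fin_eq : φ '' M.fin = N.fin
  lab : ∀ t ∈ M.T, M.μ t = N.μ (φ t)
  send_cover : ∀ p ∈ M.P, ∀ t, (φ p, t) ∈ N.F → dir N t = Dir.send →
    ∃ t', (p, t') ∈ M.F ∧ φ t' = t

/-- Composability of two OPNs. -/
def Composable (N M : OPN Node L) : Prop :=
  (N.nodes ∩ M.nodes = (N.I ∪ N.O) ∩ (M.I ∪ M.O)) ∧
  (((N.I ∩ M.O) ∪ (M.I ∩ N.O)).Nonempty →
    N.O ⊆ M.I ∧ M.O ⊆ N.I ∧ N.I ∩ M.I = ∅ ∧ N.O ∩ M.O = ∅)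

open Classical in
noncomputable def compose2 (N M : OPN Node L) : OPN Node L where
  P := N.P ∪ M.P ∪ ((N.I ∪ M.I) ∩ (N.O ∪ M.O))
  I := (N.I ∪ M.I) \ (N.O ∪ M.O)
  O := (N.O ∪ M.O) \ (N.I ∪ M.I)
  T := N.T ∪ M.T
  F := N.F ∪ M.F
  init := N.init ∪ M.init
  fin := N.fin ∪ M.fin
  μ := fun x => if x ∈ N.T then N.μ x else M.μ x

end PortNets

namespace PortNets

/-- Nodes of the synchronization pattern net with `n` clients: server places
`pi, pp, pq, pr`, interface places `pa1, pa2, pa3`, client places `pic j, ppc j, pqc j,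
prc j`, server transitions `tu, tv, tw, tt`, and client transitions `tuc j, tvc j, twc j`. -/
inductive SPNode (n : ℕ) : Type
  | pi | pp | pq | pr
  | pa1 | pa2 | pa3
  | pic (j : Fin n) | ppc (j : Fin n) | pqc (j : Fin n) | prc (j : Fin n)
  | tu | tv | tw | tt
  | tuc (j : Fin n) | tvc (j : Fin n) | twc (j : Fin n)
deriving DecidableEq

/-- Transitions of the synchronization pattern net. -/
def spT (n : ℕ) : Set (SPNode n) :=
  {x | x = SPNode.tu ∨ x = SPNode.tv ∨ x = SPNode.tw ∨ x = SPNode.tt ∨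
       ∃ j, x = SPNode.tuc j ∨ x = SPNode.tvc j ∨ x = SPNode.twc j}

/-- Flow relation of the synchronization pattern net: `•u = {i, a1}`, `u• = {p}`;
`•v = {p}`, `v• = {q, a2}`; `•w = {q, a3}`, `w• = {r}`; `•t = {r}`, `t• = {i}`;
`•u_j = {i_j}`, `u_j• = {p_j, a1}`; `•v_j = {p_j, a2}`, `v_j• = {q_j}`;
`•w_j = {q_j}`, `w_j• = {r_j, a3}`. -/
def spF (n : ℕ) : Set (SPNode n × SPNode n) :=
  {x | x = (SPNode.pi, SPNode.tu) ∨ x = (SPNode.pa1, SPNode.tu) ∨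
       x = (SPNode.tu, SPNode.pp) ∨
       x = (SPNode.pp, SPNode.tv) ∨ x = (SPNode.tv, SPNode.pq) ∨
       x = (SPNode.tv, SPNode.pa2) ∨
       x = (SPNode.pq, SPNode.tw) ∨ x = (SPNode.pa3, SPNode.tw) ∨
       x = (SPNode.tw, SPNode.pr) ∨
       x = (SPNode.pr, SPNode.tt) ∨ x = (SPNode.tt, SPNode.pi) ∨
       ∃ j, x = (SPNode.pic j, SPNode.tuc j) ∨ x = (SPNode.tuc j, SPNode.ppc j) ∨
            x = (SPNode.tuc j, SPNode.pa1) ∨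
            x = (SPNode.ppc j, SPNode.tvc j) ∨ x = (SPNode.pa2, SPNode.tvc j) ∨
            x = (SPNode.tvc j, SPNode.pqc j) ∨
            x = (SPNode.pqc j, SPNode.twc j) ∨ x = (SPNode.twc j, SPNode.prc j) ∨
            x = (SPNode.twc j, SPNode.pa3)}

/-- Initial marking `{i} + Σ_j {i_j}` of the synchronization pattern net. -/
noncomputable def spM0 (n : ℕ) : SPNode n → ℕ :=
  mark ({SPNode.pi} ∪ Set.range SPNode.pic)

/-- Final marking `{i} + Σ_j {r_j}` of the synchronization pattern net. -/
noncomputable def spMf (n : ℕ) : SPNode n → ℕ :=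
  mark ({SPNode.pi} ∪ Set.range SPNode.prc)

/-- The five place invariants of the synchronization pattern (Lemma on place invariants);
the fifth equation is over the integers. -/
def SPInv (n : ℕ) (m : SPNode n → ℕ) : Prop :=
  (m SPNode.pi + m SPNode.pp + m SPNode.pq + m SPNode.pr = 1) ∧
  (∀ j : Fin n, m (SPNode.pic j) + m (SPNode.ppc j) + m (SPNode.pqc j) + m (SPNode.prc j) = 1) ∧
  (∑ j : Fin n, m (SPNode.ppc j) = m SPNode.pa1 + m SPNode.pp + m SPNode.pa2) ∧
  ((∑ j : Fin n, m (SPNode.pqc j)) + m SPNode.pa2 ≤ 1) ∧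
  (m SPNode.pa2 + m SPNode.pa3 ≤ 1 ∧
    (m SPNode.pa2 : ℤ) + (m SPNode.pa3 : ℤ) =
      (m SPNode.pq : ℤ) - ∑ j : Fin n, (m (SPNode.pqc j) : ℤ))

end PortNets

/-! The server places `i, p, q, r` always carry exactly one token, so `m(q) ≤ 1`. Moreover every
token on `q` is matched by exactly one token on `a₂`, `a₃` or some `q_j`: `v` marks `q` and `a₂`,
`v_j` moves the `a₂` token to `q_j`, `w_j` moves it on to `a₃`, and `w` consumes it together with
the token on `q`. This is the place invariant `m(q) = m(a₂) + m(a₃) + Σ_j m(q_j)`, and both claims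
follow from it and `m(q) ≤ 1`. -/

namespace PortNets

section PlaceInvariants

variable {Node : Type} {T : Set Node} {F : Set (Node × Node)}

open Classical in
noncomputable def incidence (F : Set (Node × Node)) (t p : Node) : ℤ :=
  (if (t, p) ∈ F then 1 else 0) - (if (p, t) ∈ F then 1 else 0)

def weightedCount (s : Finset Node) (w : Node → ℤ) (m : Node → ℕ) : ℤ :=
  ∑ p ∈ s, w p * m p

def IsPlaceInvariant (T : Set Node) (F : Set (Node × Node)) (s : Finset Node)
    (w : Node → ℤ) : Prop :=
  ∀ t ∈ T, ∑ p ∈ s, w p * incidence F t p = 0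

/-- Enabledness rules out the truncation in `fireAt`. -/
lemma fireAt_cast_of_enabled {m : Node → ℕ} {t : Node} (hen : ∀ p, (p, t) ∈ F → 1 ≤ m p)
    (p : Node) : (fireAt F m t p : ℤ) = m p + incidence F t p := by
  unfold fireAt incidence
  by_cases hpre : (p, t) ∈ F
  · have := hen p hpre
    simp only [hpre, if_true]
    split_ifs <;> omega
  · simp only [hpre, if_false]
    split_ifs <;> omega

lemma IsPlaceInvariant.weightedCount_fires {s : Finset Node} {w : Node → ℤ}
    (hw : IsPlaceInvariant T F s w) {m m' : Node → ℕ} {t : Node} (hf : Fires T F m t m') :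
    weightedCount s w m' = weightedCount s w m := by
  obtain ⟨ht, hen, rfl⟩ := hf
  simp only [weightedCount, fireAt_cast_of_enabled hen, mul_add, Finset.sum_add_distrib,
    hw t ht, add_zero]

lemma IsPlaceInvariant.weightedCount_reach {s : Finset Node} {w : Node → ℤ}
    (hw : IsPlaceInvariant T F s w) {m m' : Node → ℕ} (hreach : Reach T F m m') :
    weightedCount s w m' = weightedCount s w m := by
  obtain ⟨σ, hσ⟩ := hreach
  induction hσ with
  | nil => rfl
  | cons hf _ ih => rw [ih, hw.weightedCount_fires hf]

end PlaceInvariants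

section SyncPattern

variable (n : ℕ)

def spServerPlaces : Finset (SPNode n) := {.pi, .pp, .pq, .pr}

def spSyncPlaces : Finset (SPNode n) :=
  insert .pq (insert .pa2 (insert .pa3 (Finset.univ.image SPNode.pqc)))

def spSyncWeight : SPNode n → ℤ
  | .pq => 1
  | .pa2 | .pa3 | .pqc _ => -1
  | _ => 0

lemma sum_spSyncPlaces {M : Type} [AddCommMonoid M] (f : SPNode n → M) :
    ∑ p ∈ spSyncPlaces n, f p = f .pq + f .pa2 + f .pa3 + ∑ j, f (.pqc j) := by
  simp [spSyncPlaces, add_assoc, Finset.sum_image fun _ _ _ _ h => SPNode.pqc.inj h]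

lemma isPlaceInvariant_spServer : IsPlaceInvariant (spT n) (spF n) (spServerPlaces n) 1 := by
  rintro t (rfl | rfl | rfl | rfl | ⟨j, rfl | rfl | rfl⟩) <;>
    simp [spServerPlaces, incidence, spF, -Finset.sum_boole]

lemma isPlaceInvariant_spSync :
    IsPlaceInvariant (spT n) (spF n) (spSyncPlaces n) (spSyncWeight n) := by
  rintro t (rfl | rfl | rfl | rfl | ⟨j, rfl | rfl | rfl⟩) <;>
    simp [sum_spSyncPlaces, spSyncWeight, incidence, spF]

lemma weightedCount_spServer (m : SPNode n → ℕ) :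
    weightedCount (spServerPlaces n) 1 m = m .pi + m .pp + m .pq + m .pr := by
  simp [weightedCount, spServerPlaces, add_assoc]

lemma weightedCount_spSync (m : SPNode n → ℕ) :
    weightedCount (spSyncPlaces n) (spSyncWeight n) m =
      m .pq - m .pa2 - m .pa3 - ((∑ j, m (.pqc j) : ℕ) : ℤ) := by
  simp [weightedCount, sum_spSyncPlaces, spSyncWeight, sub_eq_add_neg]

end SyncPattern

/-- in the net system of the synchronization pattern with `n` clients,
every reachable marking `m` satisfies: if `m(q) = 1` then `Σ_j m(q_j) ≤ 1`, and if
`Σ_j m(q_j) = 1` then `m(q) = 1`. -/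
theorem sp_sync_places (n : ℕ) (m : SPNode n → ℕ)
    (hreach : Reach (spT n) (spF n) (spM0 n) m) :
    (m SPNode.pq = 1 → (∑ j : Fin n, m (SPNode.pqc j)) ≤ 1) ∧
    ((∑ j : Fin n, m (SPNode.pqc j)) = 1 → m SPNode.pq = 1) := by
  have hserver : (m .pi + m .pp + m .pq + m .pr : ℤ) = 1 := by
    rw [← weightedCount_spServer, (isPlaceInvariant_spServer n).weightedCount_reach hreach,
      weightedCount_spServer]
    simp [spM0, mark]
  have hsync : m .pq - m .pa2 - m .pa3 - ((∑ j, m (.pqc j) : ℕ) : ℤ) = 0 := by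
    rw [← weightedCount_spSync, (isPlaceInvariant_spSync n).weightedCount_reach hreach,
      weightedCount_spSync]
    simp [spM0, mark]
  omega

end PortNets
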